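/- arXiv:2402.15638 — 3 statements merged into one kernel-verified Lean document; each statement's English description precedes it below -/
import Mathlib

section
/- If x* maximizes the sum of logarithms ∑ᵢ log xᵢ over a convex set D ⊆ (0,∞)^K, then for every x ∈ D, the sum of proportional changes satisfies ∑ᵢ (xᵢ − xᵢ*)/xᵢ* ≤ 0 (proportional fairness). -/
open Real Filter Topology


/-- If `xs` maximizes `∑ i, log (x i)` over a convex set `D ⊆ (0,∞)^K`, then for every
`x ∈ D`, `∑ i, (x i - xs i) / xs i ≤ 0` (proportional fairness). -/
theorem stmt_1 {K : ℕ} (D : Set (Fin K → ℝ)) (hD : Convex ℝ D)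
    (hpos : ∀ x ∈ D, ∀ i, 0 < x i)
    (xs : Fin K → ℝ) (hxs : xs ∈ D)
    (hmax : ∀ x ∈ D, ∑ i, Real.log (x i) ≤ ∑ i, Real.log (xs i)) :
    ∀ x ∈ D, ∑ i, (x i - xs i) / xs i ≤ 0 := by
  intro x hx
  set a : Fin K → ℝ := fun i => (x i - xs i) / xs i with ha
  set g : ℝ → ℝ := fun t => ∑ i, Real.log (1 + t * a i) with hg
  have hxsi : ∀ i, 0 < xs i := hpos xs hxs
  -- g t ≤ 0 for t ∈ (0,1]
  have hkey : ∀ t ∈ Set.Ioc (0:ℝ) 1, g t ≤ 0 := by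
    intro t ht
    have hmem : (fun i => xs i + t * (x i - xs i)) ∈ D := by
      have := hD hxs hx (by linarith [ht.1, ht.2] : (0:ℝ) ≤ 1 - t) ht.1.le (by ring)
      convert this using 1
      funext i
      simp [smul_eq_mul]; ring
    have hle := hmax _ hmem
    have : g t = ∑ i, Real.log (xs i + t * (x i - xs i)) - ∑ i, Real.log (xs i) := by
      rw [← Finset.sum_sub_distrib]
      refine Finset.sum_congr rfl fun i _ => ?_
      rw [← Real.log_div (hpos _ hmem i).ne' (hxsi i).ne']
      congr 1
      have h := (hxsi i).ne'
      simp only [ha]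
      field_simp
    linarith
  -- derivative of g at 0 is ∑ a
  have hderiv : HasDerivAt g (∑ i, a i) 0 := by
    have : HasDerivAt g (∑ i, a i * 1) 0 := by
      apply HasDerivAt.fun_sum
      intro i _
      have h1 : HasDerivAt (fun t : ℝ => 1 + t * a i) (a i) 0 := by
        simpa using (hasDerivAt_id (0:ℝ)).mul_const (a i) |>.const_add 1
      have h2 : HasDerivAt Real.log ((1 : ℝ)⁻¹) (1 + 0 * a i) := by
        simpa using Real.hasDerivAt_log (by norm_num : (1:ℝ) + 0 * a i ≠ 0)
      simpa [mul_comm, Function.comp_def] using h2.comp 0 h1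
    simpa using this
  have hslope : Tendsto (fun t => g t / t) (𝓝[>] (0:ℝ)) (𝓝 (∑ i, a i)) := by
    have := (hasDerivAt_iff_tendsto_slope.mp hderiv).mono_left
      (nhdsWithin_mono 0 (fun t ht => ne_of_gt ht : Set.Ioi (0:ℝ) ⊆ {0}ᶜ))
    refine this.congr' ?_
    filter_upwards [self_mem_nhdsWithin] with t ht
    have hg0 : g 0 = 0 := by simp [hg]
    simp [slope_def_field, hg0, div_eq_inv_mul]
  have hfinal : (∑ i, a i) ≤ 0 := by
    refine le_of_tendsto hslope ?_
    filter_upwards [Ioo_mem_nhdsGT_of_mem (by norm_num : (0:ℝ) ∈ Set.Ico 0 1)] with t ht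
    exact div_nonpos_of_nonpos_of_nonneg (hkey t ⟨ht.1, ht.2.le⟩) ht.1.le
  exact hfinal
end

section
/- If w ∈ (0,∞)^K satisfies G^T G w = w^{−1/α}, then (∑ᵢ wᵢ^{−1/α}) / (∑ᵢ wᵢ) ≥ σ_K(G^T G)/√K. -/
open Matrix

/-- Euclidean norm of a vector in `ℝ^K`. -/
noncomputable def enorm8 {K : ℕ} (v : Fin K → ℝ) : ℝ := Real.sqrt (∑ i, (v i) ^ 2)

/-- Smallest singular value of a square matrix, as the infimum of `‖A v‖` over unit vectors. -/
noncomputable def sigmaMin8 {K : ℕ} (A : Matrix (Fin K) (Fin K) ℝ) : ℝ :=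
  ⨅ v : {v : Fin K → ℝ // enorm8 v = 1}, enorm8 (A.mulVec v)

/-- If `w ∈ (0,∞)^K` satisfies `GᵀG w = w^(-1/α)` then
`(∑ᵢ wᵢ^(-1/α)) / (∑ᵢ wᵢ) ≥ σ_K(GᵀG)/√K`. -/
theorem stmt_8 {m K : ℕ} (hK : 0 < K) (G : Matrix (Fin m) (Fin K) ℝ)
    (w : Fin K → ℝ) (hw : ∀ i, 0 < w i) (α : ℝ) (hα : α ≠ 0)
    (heq : (Gᵀ * G).mulVec w = fun i => (w i) ^ (-1 / α)) :
    sigmaMin8 (Gᵀ * G) / Real.sqrt K ≤ (∑ i, (w i) ^ (-1 / α)) / (∑ i, w i) := by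
  haveI : Nonempty (Fin K) := ⟨⟨0, hK⟩⟩
  set u : Fin K → ℝ := fun i => (w i) ^ (-1 / α) with hu
  have hupos : ∀ i, 0 < u i := fun i => Real.rpow_pos_of_pos (hw i) _
  set S : ℝ := ∑ i, w i with hS
  set S' : ℝ := ∑ i, u i with hS'
  have hSpos : 0 < S := Finset.sum_pos (fun i _ => hw i) Finset.univ_nonempty
  have hS'pos : 0 < S' := Finset.sum_pos (fun i _ => hupos i) Finset.univ_nonempty
  set n : ℝ := Real.sqrt (∑ i, (w i) ^ 2) with hn
  have hsumsq : 0 < ∑ i, (w i) ^ 2 :=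
    Finset.sum_pos (fun i _ => pow_pos (hw i) 2) Finset.univ_nonempty
  have hnpos : 0 < n := Real.sqrt_pos.mpr hsumsq
  have hn2 : n ^ 2 = ∑ i, (w i) ^ 2 := Real.sq_sqrt hsumsq.le
  -- unit vector
  set v : Fin K → ℝ := fun i => n⁻¹ * w i with hv
  have hv1 : enorm8 v = 1 := by
    unfold enorm8
    have : ∑ i, (v i) ^ 2 = 1 := by
      simp only [hv, mul_pow, ← Finset.mul_sum]
      rw [← hn2]
      field_simp
    rw [this, Real.sqrt_one]
  -- the value at v
  have hmul : (Gᵀ * G).mulVec v = n⁻¹ • u := by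
    have : v = n⁻¹ • w := by funext i; simp [hv, smul_eq_mul]
    rw [this, Matrix.mulVec_smul, heq]
  have hnormu : enorm8 ((Gᵀ * G).mulVec v) = n⁻¹ * Real.sqrt (∑ i, (u i) ^ 2) := by
    rw [hmul]
    unfold enorm8
    have : ∑ i, ((n⁻¹ • u) i) ^ 2 = (n⁻¹) ^ 2 * ∑ i, (u i) ^ 2 := by
      simp [Pi.smul_apply, smul_eq_mul, mul_pow, Finset.mul_sum]
    rw [this, Real.sqrt_mul (by positivity), Real.sqrt_sq (by positivity)]
  set E : ℝ := Real.sqrt (∑ i, (u i) ^ 2) with hE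
  -- σ_min ≤ E / n
  have hσle : sigmaMin8 (Gᵀ * G) ≤ n⁻¹ * E := by
    have := ciInf_le (f := fun v : {v : Fin K → ℝ // enorm8 v = 1} =>
        enorm8 ((Gᵀ * G).mulVec v))
      ⟨0, by rintro x ⟨y, rfl⟩; exact Real.sqrt_nonneg _⟩ (⟨v, hv1⟩ : {v : Fin K → ℝ // enorm8 v = 1})
    exact this.trans_eq hnormu
  haveI : Nonempty {v : Fin K → ℝ // enorm8 v = 1} := ⟨⟨v, hv1⟩⟩
  have hσ0 : 0 ≤ sigmaMin8 (Gᵀ * G) :=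
    le_ciInf (fun x => Real.sqrt_nonneg _)
  -- E ≤ S'
  have hEle : E ≤ S' := by
    have h1 : ∑ i, (u i) ^ 2 ≤ S' ^ 2 := by
      have : ∀ i ∈ Finset.univ, (u i) ^ 2 ≤ u i * S' := by
        intro i _
        have hle : u i ≤ S' := Finset.single_le_sum (fun j _ => (hupos j).le) (Finset.mem_univ i)
        nlinarith [hupos i]
      calc ∑ i, (u i) ^ 2 ≤ ∑ i, u i * S' := Finset.sum_le_sum this
        _ = S' ^ 2 := by rw [← Finset.sum_mul]; ring
    calc E ≤ Real.sqrt (S' ^ 2) := Real.sqrt_le_sqrt h1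
      _ = S' := Real.sqrt_sq hS'pos.le
  -- S ≤ √K * n
  have hK2 : S ≤ Real.sqrt K * n := by
    have h1 : S ^ 2 ≤ (K : ℝ) * ∑ i, (w i) ^ 2 := by
      have := sq_sum_le_card_mul_sum_sq (s := (Finset.univ : Finset (Fin K)))
        (f := w)
      simpa using this
    calc S = Real.sqrt (S ^ 2) := (Real.sqrt_sq hSpos.le).symm
      _ ≤ Real.sqrt ((K : ℝ) * ∑ i, (w i) ^ 2) := Real.sqrt_le_sqrt h1
      _ = Real.sqrt K * n := by rw [Real.sqrt_mul (Nat.cast_nonneg K)]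
  have hKpos : 0 < Real.sqrt K := Real.sqrt_pos.mpr (by exact_mod_cast hK)
  have hEpos : 0 ≤ E := Real.sqrt_nonneg _
  rw [div_le_div_iff₀ hKpos hSpos]
  -- σ * S ≤ σ * (√K n) ≤ √K * (n σ) ≤ √K * E ≤ √K * S' = S' * √K
  have h1 : sigmaMin8 (Gᵀ * G) * n ≤ E := by
    have := mul_le_mul_of_nonneg_right hσle hnpos.le
    calc sigmaMin8 (Gᵀ * G) * n ≤ n⁻¹ * E * n := this
      _ = E := by field_simp
  nlinarith [mul_le_mul_of_nonneg_left hK2 hσ0, mul_le_mul_of_nonneg_left h1 hKpos.le,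
    mul_le_mul_of_nonneg_left hEle hKpos.le]
end

section
/- Under L-smoothness of each lᵢ and the FairGrad update θ_{t+1} = θ_t − η_t d_t with d_t = ∑ᵢ w_{t,i} g_{t,i}, g_{t,i}^T d_t = w_{t,i}^{−1/α}, and step size η_t = (∑ᵢ w_{t,i}^{−1/α})/(L K ∑ᵢ w_{t,i}^{1−1/α}), the average loss satisfies 𝓛(θ_{t+1}) ≤ 𝓛(θ_t) − (L η_t²/2) ∑ᵢ w_{t,i}^{1−1/α}; in particular 𝓛(θ_t) is monotonically non-increasing. -/
open scoped RealInnerProductSpace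

theorem descent {F : Type*} [NormedAddCommGroup F] [InnerProductSpace ℝ F] [CompleteSpace F]
    {f : F → ℝ} {L : ℝ} (hL : 0 ≤ L) (hdiff : Differentiable ℝ f)
    (hsmooth : ∀ x y, ‖gradient f x - gradient f y‖ ≤ L * ‖x - y‖)
    (x v : F) :
    f (x + v) ≤ f x + ⟪gradient f x, v⟫ + L / 2 * ‖v‖ ^ 2 := by
  have hderiv : ∀ s : ℝ, HasDerivAt (fun s : ℝ => f (x + s • v))
      ⟪gradient f (x + s • v), v⟫ s := by
    intro s
    have h1 : HasDerivAt (fun s : ℝ => x + s • v) v s :=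
      by simpa using ((hasDerivAt_id s).smul_const v).const_add x
    have h2 := (hdiff (x + s • v)).hasFDerivAt.comp_hasDerivAt s h1
    have h3 := ((hdiff (x + s • v)).hasGradientAt).hasFDerivAt.comp_hasDerivAt s h1
    simpa [InnerProductSpace.toDual_apply_apply, Function.comp_def] using h3
  have hgradcont : Continuous (gradient f) := by
    have : LipschitzWith (Real.toNNReal L) (gradient f) := by
      apply LipschitzWith.of_dist_le_mul
      intro a b
      rw [dist_eq_norm, dist_eq_norm]
      simpa [Real.coe_toNNReal L hL] using hsmooth a b
    exact this.continuous
  have hcont : Continuous fun s : ℝ => ⟪gradient f (x + s • v), v⟫ := by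
    exact ((hgradcont.comp (by continuity)).inner continuous_const)
  have hint : ∫ s in (0:ℝ)..1, ⟪gradient f (x + s • v), v⟫ = f (x + v) - f x := by
    have := intervalIntegral.integral_eq_sub_of_hasDerivAt
      (f := fun s : ℝ => f (x + s • v)) (a := 0) (b := 1)
      (fun s _ => hderiv s) (hcont.intervalIntegrable 0 1)
    simpa using this
  have hbound : ∫ s in (0:ℝ)..1, ⟪gradient f (x + s • v), v⟫ ≤
      ∫ s in (0:ℝ)..1, (⟪gradient f x, v⟫ + L * s * ‖v‖ ^ 2) := by
    apply intervalIntegral.integral_mono_on zero_le_one (hcont.intervalIntegrable 0 1)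
      ((by continuity : Continuous fun s : ℝ => ⟪gradient f x, v⟫ + L * s * ‖v‖ ^ 2).intervalIntegrable 0 1)
    intro s hs
    have h1 : ⟪gradient f (x + s • v), v⟫ - ⟪gradient f x, v⟫
        = ⟪gradient f (x + s • v) - gradient f x, v⟫ := by
      rw [inner_sub_left]
    have h2 : ⟪gradient f (x + s • v) - gradient f x, v⟫ ≤ L * s * ‖v‖ ^ 2 := by
      calc ⟪gradient f (x + s • v) - gradient f x, v⟫
          ≤ ‖gradient f (x + s • v) - gradient f x‖ * ‖v‖ := real_inner_le_norm _ _
        _ ≤ (L * ‖x + s • v - x‖) * ‖v‖ := by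
            apply mul_le_mul_of_nonneg_right (hsmooth _ _) (norm_nonneg _)
        _ = L * s * ‖v‖ ^ 2 := by
            rw [add_sub_cancel_left, norm_smul]
            simp [Real.norm_eq_abs, abs_of_nonneg hs.1]
            ring
    linarith
  have hval : ∫ s in (0:ℝ)..1, (⟪gradient f x, v⟫ + L * s * ‖v‖ ^ 2)
      = ⟪gradient f x, v⟫ + L / 2 * ‖v‖ ^ 2 := by
    rw [intervalIntegral.integral_add (by apply Continuous.intervalIntegrable; continuity)
      (by apply Continuous.intervalIntegrable; continuity)]
    have : ∫ s in (0:ℝ)..1, L * s * ‖v‖ ^ 2 = L / 2 * ‖v‖ ^ 2 := by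
      have : (fun s : ℝ => L * s * ‖v‖ ^ 2) = fun s : ℝ => (L * ‖v‖ ^ 2) * s := by
        funext s; ring
      rw [this, intervalIntegral.integral_const_mul, integral_id]
      ring
    simp [this]
  linarith [hint ▸ hbound, hval]

/-- Under `L`-smoothness of each `lᵢ` and the FairGrad update, the average loss satisfies
`𝓛(θ_{t+1}) ≤ 𝓛(θ_t) - (L η_t²/2) ∑ᵢ w_{t,i}^{1-1/α}`; in particular it is
monotonically non-increasing. -/
theorem stmt_11 {m K : ℕ} (hK : 0 < K)
    (l : Fin K → EuclideanSpace ℝ (Fin m) → ℝ) (L : ℝ) (hL : 0 < L)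
    (hdiff : ∀ i, Differentiable ℝ (l i))
    (hsmooth : ∀ i x y, ‖gradient (l i) x - gradient (l i) y‖ ≤ L * ‖x - y‖)
    (α : ℝ) (hα : α ≠ 0)
    (θ : ℕ → EuclideanSpace ℝ (Fin m)) (w : ℕ → Fin K → ℝ)
    (hw : ∀ t i, 0 < w t i)
    (d : ℕ → EuclideanSpace ℝ (Fin m))
    (hd : ∀ t, d t = ∑ i, w t i • gradient (l i) (θ t))
    (hdot : ∀ t i, ⟪gradient (l i) (θ t), d t⟫ = (w t i) ^ (-1 / α))
    (η : ℕ → ℝ)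
    (hη : ∀ t, η t = (∑ i, (w t i) ^ (-1 / α)) / (L * K * ∑ i, (w t i) ^ (1 - 1 / α)))
    (hupd : ∀ t, θ (t + 1) = θ t - η t • d t) :
    ∀ t, (1 / K : ℝ) * ∑ i, l i (θ (t + 1)) ≤
      (1 / K : ℝ) * ∑ i, l i (θ t) - L * (η t) ^ 2 / 2 * ∑ i, (w t i) ^ (1 - 1 / α) := by
  intro t
  haveI : Nonempty (Fin K) := ⟨⟨0, hK⟩⟩
  set S1 : ℝ := ∑ i, (w t i) ^ (-1 / α) with hS1
  set S2 : ℝ := ∑ i, (w t i) ^ (1 - 1 / α) with hS2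
  have hKpos : (0 : ℝ) < K := by exact_mod_cast hK
  have hwsplit : ∀ i, (w t i) ^ (1 - 1 / α) = w t i * (w t i) ^ (-1 / α) := by
    intro i
    rw [show (1 : ℝ) - 1 / α = 1 + (-1 / α) by ring, Real.rpow_add (hw t i), Real.rpow_one]
  have hS2pos : 0 < S2 := by
    apply Finset.sum_pos (fun i _ => Real.rpow_pos_of_pos (hw t i) _) Finset.univ_nonempty
  -- ‖d t‖² = S2
  have hdd : ‖d t‖ ^ 2 = S2 := by
    have : ⟪d t, d t⟫ = S2 := by
      nth_rewrite 1 [hd t]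
      rw [sum_inner]
      simp only [real_inner_smul_left, hdot]
      exact (Finset.sum_congr rfl fun i _ => (hwsplit i).symm)
    rw [← this, real_inner_self_eq_norm_sq]
  -- S1 = η t * (L * K * S2)
  have hS1eq : S1 = η t * (L * K * S2) := by
    have hden : L * K * S2 ≠ 0 := by positivity
    rw [hη t, ← hS2, ← hS1, div_mul_cancel₀ _ hden]
  -- per-i descent
  have hstep : ∀ i, l i (θ (t + 1)) ≤
      l i (θ t) - η t * (w t i) ^ (-1 / α) + L / 2 * (η t ^ 2 * S2) := by
    intro i
    have h := descent hL.le (hdiff i) (hsmooth i) (θ t) (-(η t • d t))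
    have hrw : θ t + -(η t • d t) = θ (t + 1) := by rw [hupd t]; abel
    rw [hrw] at h
    have h1 : ⟪gradient (l i) (θ t), -(η t • d t)⟫ = -(η t * (w t i) ^ (-1 / α)) := by
      rw [inner_neg_right, real_inner_smul_right, hdot]
    have h2 : ‖-(η t • d t)‖ ^ 2 = η t ^ 2 * S2 := by
      rw [norm_neg, norm_smul, mul_pow, ← hdd]
      simp [sq_abs]
    rw [h1, h2] at h
    linarith
  have hsum : ∑ i, l i (θ (t + 1)) ≤
      ∑ i, l i (θ t) - η t * S1 + K * (L / 2 * (η t ^ 2 * S2)) := by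
    calc ∑ i, l i (θ (t + 1))
        ≤ ∑ i, (l i (θ t) - η t * (w t i) ^ (-1 / α) + L / 2 * (η t ^ 2 * S2)) :=
          Finset.sum_le_sum fun i _ => hstep i
      _ = ∑ i, l i (θ t) - η t * S1 + K * (L / 2 * (η t ^ 2 * S2)) := by
          rw [Finset.sum_add_distrib, Finset.sum_sub_distrib, ← Finset.mul_sum,
            Finset.sum_const, Finset.card_univ, Fintype.card_fin, nsmul_eq_mul]
  have key : (1 / K : ℝ) * (∑ i, l i (θ t) - η t * S1 + K * (L / 2 * (η t ^ 2 * S2)))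
      = (1 / K : ℝ) * ∑ i, l i (θ t) - L * (η t) ^ 2 / 2 * S2 := by
    rw [hS1eq]
    field_simp
    ring
  calc (1 / K : ℝ) * ∑ i, l i (θ (t + 1))
      ≤ (1 / K : ℝ) * (∑ i, l i (θ t) - η t * S1 + K * (L / 2 * (η t ^ 2 * S2))) := by
        apply mul_le_mul_of_nonneg_left hsum (by positivity)
    _ = (1 / K : ℝ) * ∑ i, l i (θ t) - L * (η t) ^ 2 / 2 * S2 := key
end
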